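/- arXiv:2603.00784 — 2 statements merged into one kernel-verified Lean document; each statement's English description precedes it below -/
import Mathlib

section
/- Let W be a standard Brownian motion and b ≠ 0 a real number. For ε > 0 define V_ε(b) = (1/ε) ∫_0^∞ 1{|W(t) − bt| ≤ ε/2} dt. Then E[V_ε(b)] → 1/|b| as ε → 0. -/
open MeasureTheory ProbabilityTheory Filter BoundedContinuousFunction

/-- A standard Brownian motion on a probability space `(Ω, P)`: it starts at `0` a.s.,
has a.s. continuous sample paths, Gaussian increments `W t - W s ~ N(0, t - s)` for
`0 ≤ s ≤ t`, and independent increments over any finite increasing sequence of times. -/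
def IsStdBrownian {Ω : Type*} [MeasurableSpace Ω] (P : Measure Ω) (W : ℝ → Ω → ℝ) : Prop :=
  IsProbabilityMeasure P ∧
  (∀ t : ℝ, Measurable (W t)) ∧
  (∀ᵐ ω ∂P, W 0 ω = 0) ∧
  (∀ᵐ ω ∂P, Continuous fun t : ℝ => W t ω) ∧
  (∀ s t : ℝ, 0 ≤ s → s ≤ t →
    P.map (fun ω => W t ω - W s ω) = gaussianReal 0 (Real.toNNReal (t - s))) ∧
  (∀ (n : ℕ) (t : Fin (n + 1) → ℝ), Monotone t → (∀ i, 0 ≤ t i) →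
    iIndepFun
      (fun i : Fin n => fun ω => W (t i.succ) ω - W (t i.castSucc) ω) P)

/-- The normalized time `(1/ε) ∫_0^∞ 1{|W t - b t| ≤ ε/2} dt` that the process `W`
spends in the strip of width `ε` around the line `t ↦ b t`. -/
noncomputable def relTime {Ω : Type*} (W : ℝ → Ω → ℝ) (b ε : ℝ) (ω : Ω) : ℝ :=
  (1 / ε) * ∫ t in Set.Ioi (0 : ℝ), (if |W t ω - b * t| ≤ ε / 2 then (1 : ℝ) else 0)

section Aux

open Real Set intervalIntegral
open scoped NNReal ENNReal

/-- Averages of a continuous integrable function over shrinking symmetric intervals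
converge to the value at the center. -/
lemma avg_tendsto_aux {f : ℝ → ℝ} (hf : Continuous f) (hi : Integrable f) (a : ℝ) :
    Tendsto (fun ε : ℝ => (1/ε) * ∫ x in Icc (a - ε/2) (a + ε/2), f x)
      (nhdsWithin 0 (Set.Ioi 0)) (nhds (f a)) := by
  set G : ℝ → ℝ := fun x => ∫ u in (0:ℝ)..x, f u with hG
  have hii : ∀ u v : ℝ, IntervalIntegrable f volume u v := fun u v => hi.intervalIntegrable
  have hd : ∀ x : ℝ, HasDerivAt G (f x) x := fun x =>
    intervalIntegral.integral_hasDerivAt_right (hii 0 x)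
      (hf.stronglyMeasurable.stronglyMeasurableAtFilter) hf.continuousAt
  have hslope : Tendsto (slope G a) (nhdsWithin a {a}ᶜ) (nhds (f a)) :=
    hasDerivAt_iff_tendsto_slope.mp (hd a)
  have key : ∀ c : ℝ, c ≠ 0 → Tendsto (fun ε : ℝ => a + c * ε) (nhdsWithin 0 (Set.Ioi 0))
      (nhdsWithin a {a}ᶜ) := by
    intro c hc
    rw [tendsto_nhdsWithin_iff]
    constructor
    · have h : Tendsto (fun ε : ℝ => a + c * ε) (nhds 0) (nhds (a + c * 0)) :=
        ((continuous_const.add (continuous_const.mul continuous_id)).tendsto (0:ℝ))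
      simp only [mul_zero, add_zero] at h
      exact h.mono_left nhdsWithin_le_nhds
    · filter_upwards [self_mem_nhdsWithin] with ε (hε : ε ∈ Set.Ioi 0)
      simp only [Set.mem_Ioi] at hε
      simp only [Set.mem_compl_iff, Set.mem_singleton_iff]
      intro h
      have : c * ε = 0 := by linarith
      rcases mul_eq_zero.mp this with h' | h'
      · exact hc h'
      · linarith
  have hplus := hslope.comp (key (1/2) (by norm_num))
  have hminus := hslope.comp (key (-(1/2)) (by norm_num))
  have h1 : Tendsto (fun ε : ℝ => (1/2) * slope G a (a + (1/2) * ε)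
        + (1/2) * slope G a (a + (-(1/2)) * ε))
      (nhdsWithin 0 (Set.Ioi 0)) (nhds (f a)) := by
    have := (hplus.const_mul (1/2:ℝ)).add (hminus.const_mul (1/2:ℝ))
    convert this using 2
    simp [Function.comp]
    ring
  refine h1.congr' ?_
  filter_upwards [self_mem_nhdsWithin] with ε (hε : ε ∈ Set.Ioi 0)
  simp only [Set.mem_Ioi] at hε
  have hle : a - ε/2 ≤ a + ε/2 := by linarith
  have hicc : ∫ x in Icc (a - ε/2) (a + ε/2), f x = G (a + ε/2) - G (a - ε/2) := by
    rw [integral_Icc_eq_integral_Ioc, ← intervalIntegral.integral_of_le hle]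
    exact (intervalIntegral.integral_interval_sub_left (hii 0 _) (hii 0 _)).symm
  rw [slope_def_field, slope_def_field, hicc]
  have h2 : a + (1/2) * ε - a = ε/2 := by ring
  have h3 : a + (-(1/2)) * ε - a = -(ε/2) := by ring
  rw [h2, h3]
  have hε' : ε ≠ 0 := ne_of_gt hε
  have : a + (-(1/2)) * ε = a - ε/2 := by ring
  rw [this, show a + (1/2) * ε = a + ε/2 by ring]
  field_simp
  ring

/-- The integral over the positive reals of the Gaussian density (with variance `t`)
evaluated along the line `t ↦ b t` equals `1/|b|`. -/
lemma gauss_line_aux (b : ℝ) (hb : b ≠ 0) :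
    ∫ t in Set.Ioi (0:ℝ), gaussianPDFReal 0 (Real.toNNReal t) (b * t) = 1 / |b| := by
  have h1 : ∀ t ∈ Set.Ioi (0:ℝ), gaussianPDFReal 0 (Real.toNNReal t) (b * t)
      = (√(2*π))⁻¹ * (t ^ ((1:ℝ)/2 - 1) * Real.exp (-(b^2/2 * t))) := by
    intro t ht
    simp only [Set.mem_Ioi] at ht
    rw [gaussianPDFReal]
    rw [Real.coe_toNNReal _ ht.le]
    rw [show (2 * π * t) = (2*π) * t by ring, Real.sqrt_mul (by positivity)]
    rw [mul_inv]
    have h : -(b * t - 0)^2 / (2 * t) = -(b^2/2 * t) := by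
      field_simp; ring
    rw [h]
    have hs : (√t)⁻¹ = t ^ ((1:ℝ)/2 - 1) := by
      rw [Real.sqrt_eq_rpow, ← Real.rpow_neg_one,
        ← Real.rpow_mul ht.le]
      norm_num
    rw [hs]; ring
  rw [setIntegral_congr_fun measurableSet_Ioi h1, MeasureTheory.integral_const_mul,
    Real.integral_rpow_mul_exp_neg_mul_Ioi one_half_pos (by positivity : (0:ℝ) < b^2/2)]
  have h2 : ((1:ℝ) / (b^2/2)) ^ ((1:ℝ)/2) = √2 / |b| := by
    rw [show (1:ℝ)/(b^2/2) = 2 / b^2 by ring, ← Real.sqrt_eq_rpow,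
      Real.sqrt_div (by norm_num : (0:ℝ) ≤ 2), Real.sqrt_sq_eq_abs]
  rw [h2, Real.Gamma_one_half_eq, Real.sqrt_mul (by norm_num : (0:ℝ) ≤ 2)]
  have hb' : |b| ≠ 0 := abs_ne_zero.mpr hb
  have hπ : √π ≠ 0 := by positivity
  have h2' : √2 ≠ 0 := by positivity
  field_simp

lemma pdf_cont_aux (v : ℝ≥0) : Continuous (gaussianPDFReal 0 v) := by
  rw [gaussianPDFReal_def]
  have h : Continuous fun x : ℝ => -(x - 0)^2 / (2*(v:ℝ)) := by fun_prop
  exact continuous_const.mul (Real.continuous_exp.comp h)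

/-- Uniform bound on the mass that the Gaussian of variance `t` puts on the strip of
width `ε` around `b t`, for `0 < ε ≤ |b|`. -/
lemma strip_bound_aux {b ε t : ℝ} (hε : 0 < ε) (hεb : ε ≤ |b|) (ht : 0 < t) :
    ∫ x in Set.Icc (b*t - ε/2) (b*t + ε/2), gaussianPDFReal 0 (Real.toNNReal t) x
      ≤ ε * (Real.exp (b^2/8) * ((√(2*π*t))⁻¹ * Real.exp (-(b^2/8) * t))) := by
  have hvol : volume (Icc (b*t - ε/2) (b*t + ε/2)) = ENNReal.ofReal ε := by
    rw [Real.volume_Icc]; congr 1; ring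
  set M := Real.exp (b^2/8) * ((√(2*π*t))⁻¹ * Real.exp (-(b^2/8) * t)) with hM
  have hpt : ∀ x ∈ Icc (b*t - ε/2) (b*t + ε/2), gaussianPDFReal 0 (Real.toNNReal t) x ≤ M := by
    intro x hx
    rw [gaussianPDFReal, Real.coe_toNNReal _ ht.le, hM,
      show Real.exp (b^2/8) * ((√(2*π*t))⁻¹ * Real.exp (-(b^2/8)*t))
        = (√(2*π*t))⁻¹ * (Real.exp (b^2/8) * Real.exp (-(b^2/8)*t)) by ring, ← Real.exp_add]
    apply mul_le_mul_of_nonneg_left _ (inv_nonneg.2 (Real.sqrt_nonneg _))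
    rw [Real.exp_le_exp]
    simp only [sub_zero]
    rcases le_or_gt t 1 with h1 | h1
    · have hL : -x^2/(2*t) ≤ 0 :=
        div_nonpos_of_nonpos_of_nonneg (by nlinarith [sq_nonneg x]) (by linarith)
      have hR : 0 ≤ b^2/8 * (1 - t) := mul_nonneg (by positivity) (by linarith)
      nlinarith
    · have hxabs : |x - b*t| ≤ ε/2 := by
        rw [Set.mem_Icc] at hx
        rw [abs_le]; constructor <;> linarith [hx.1, hx.2]
      have habs1 : |b*t| - |x| ≤ |x - b*t| := by
        have := abs_sub_abs_le_abs_sub (b*t) x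
        rwa [abs_sub_comm] at this
      have hbt : |b*t| = |b| * t := by rw [abs_mul, abs_of_pos ht]
      have hh : ε/2 ≤ |b| * t / 2 := by nlinarith [abs_nonneg b]
      have h2 : |b| * t / 2 ≤ |x| := by
        rw [hbt] at habs1; linarith
      have h4 : b^2 * t^2 / 4 ≤ x^2 := by
        have h5 := mul_self_le_mul_self (by positivity) h2
        nlinarith [sq_abs x, sq_abs b]
      have h5 : b^2*t/8 ≤ x^2/(2*t) := by
        rw [div_le_div_iff₀ (by norm_num) (by positivity)]
        nlinarith
      have hb8 : (0:ℝ) ≤ b^2/8 := by positivity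
      have hnd : -x^2/(2*t) = -(x^2/(2*t)) := by ring
      linarith
  calc ∫ x in Set.Icc (b*t - ε/2) (b*t + ε/2), gaussianPDFReal 0 (Real.toNNReal t) x
      ≤ ∫ _ in Set.Icc (b*t - ε/2) (b*t + ε/2), M :=
        setIntegral_mono_on (integrable_gaussianPDFReal 0 _).integrableOn
          (integrableOn_const (by rw [hvol]; exact ENNReal.ofReal_ne_top))
          measurableSet_Icc hpt
    _ = ε * M := by
        rw [setIntegral_const, measureReal_def, hvol, ENNReal.toReal_ofReal hε.le, smul_eq_mul]

/-- Integrability of the dominating function. -/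
lemma h_int_aux {c : ℝ} (hc : 0 < c) (C : ℝ) :
    MeasureTheory.IntegrableOn (fun t => C * ((√(2*π*t))⁻¹ * Real.exp (-c * t)))
      (Set.Ioi (0:ℝ)) := by
  apply Integrable.const_mul
  have h0 := integrableOn_rpow_mul_exp_neg_mul_rpow
    (s := -(1:ℝ)/2) (p := 1) (b := c) (by norm_num) one_pos hc
  have h1 : IntegrableOn (fun t : ℝ => (√(2*π))⁻¹ * (t ^ (-(1:ℝ)/2) * Real.exp (-c * t)))
      (Set.Ioi 0) := by
    apply Integrable.const_mul
    apply h0.congr_fun ?_ measurableSet_Ioi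
    intro x hx
    dsimp only
    rw [Real.rpow_one]
  apply h1.congr_fun ?_ measurableSet_Ioi
  intro x hx
  simp only [Set.mem_Ioi] at hx
  dsimp only
  have hinv : (√x)⁻¹ = x ^ (-(1:ℝ)/2) := by
    rw [Real.sqrt_eq_rpow, ← Real.rpow_neg_one, ← Real.rpow_mul hx.le]
    norm_num
  have key : (√(2*π*x))⁻¹ = (√(2*π))⁻¹ * x ^ (-(1:ℝ)/2) := by
    rw [show (2*π*x) = (2*π)*x by ring, Real.sqrt_mul (by positivity : (0:ℝ) ≤ 2*π), mul_inv, hinv]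
  rw [key]; ring

end Aux

open scoped NNReal ENNReal

/-- The expected normalized time along the line `t ↦ b t` converges to `1/|b|`
as `ε → 0⁺`. -/
theorem integral_relTime_tendsto
    {Ω : Type*} [MeasurableSpace Ω] (P : Measure Ω) (W : ℝ → Ω → ℝ)
    (hW : IsStdBrownian P W) (b : ℝ) (hb : b ≠ 0) :
    Tendsto (fun ε : ℝ => ∫ ω, relTime W b ε ω ∂P)
      (nhdsWithin 0 (Set.Ioi 0)) (nhds (1 / |b|)) := by
  classical
  obtain ⟨hP, hMeas, h0, hCont, hInc, -⟩ := hW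
  haveI := hP
  -- a measurable null set off which the path starts at 0 and is continuous
  set S : Set Ω := {ω | W 0 ω = 0 ∧ Continuous fun t : ℝ => W t ω} with hSdef
  have hSae : ∀ᵐ ω ∂P, ω ∈ S := h0.and hCont
  set N : Set Ω := MeasureTheory.toMeasurable P Sᶜ with hNdef
  have hNmeas : MeasurableSet N := measurableSet_toMeasurable _ _
  have hPN : P N = 0 := by
    rw [hNdef, measure_toMeasurable]
    exact ae_iff.mp hSae
  have hNae : ∀ᵐ ω ∂P, ω ∉ N := by
    rw [ae_iff]
    simpa [not_not] using hPN
  -- the modified process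
  set W' : ℝ → Ω → ℝ := fun t ω => if ω ∈ N then 0 else W t ω with hW'def
  have hW'me : ∀ t : ℝ, Measurable (W' t) := fun t =>
    Measurable.ite hNmeas measurable_const (hMeas t)
  have hW'cont : ∀ ω, Continuous fun t : ℝ => W' t ω := by
    intro ω
    by_cases hω : ω ∈ N
    · simp only [hW'def, if_pos hω]
      exact continuous_const
    · simp only [hW'def, if_neg hω]
      have hωS : ω ∈ S := by
        by_contra h
        exact hω (subset_toMeasurable P Sᶜ h)
      exact hωS.2
  have hjoint : Measurable (Function.uncurry W') :=
    measurable_uncurry_of_continuous_of_measurable hW'cont hW'me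
  have hmap : ∀ t : ℝ, 0 ≤ t → P.map (W' t) = gaussianReal 0 (Real.toNNReal t) := by
    intro t ht
    have h1 := hInc 0 t le_rfl ht
    rw [sub_zero] at h1
    rw [← h1]
    apply Measure.map_congr
    filter_upwards [h0, hNae] with ω hω0 hωN
    simp only [hW'def, if_neg hωN, hω0, sub_zero]
  have habs : ∀ x a r : ℝ, |x - a| ≤ r ↔ x ∈ Set.Icc (a - r) (a + r) := by
    intro x a r
    rw [Set.mem_Icc, abs_le]
    constructor <;> (rintro ⟨h1, h2⟩; constructor <;> linarith)
  have hbpos : (0:ℝ) < |b| := abs_pos.2 hb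
  -- measurability of the joint strip sets and the inner identities, per ε
  have hAmeas : ∀ ε : ℝ, MeasurableSet {p : ℝ × Ω | |W' p.1 p.2 - b * p.1| ≤ ε/2} := by
    intro ε
    have hm : Measurable fun p : ℝ × Ω => W' p.1 p.2 - b * p.1 :=
      hjoint.sub (measurable_fst.const_mul b)
    exact measurableSet_le (continuous_abs.measurable.comp hm) measurable_const
  have hinner : ∀ ε : ℝ, ∀ t ∈ Set.Ioi (0:ℝ),
      (∫⁻ ω, ({p : ℝ × Ω | |W' p.1 p.2 - b * p.1| ≤ ε/2}).indicator
        (fun _ => (1:ℝ≥0∞)) (t, ω) ∂P)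
      = gaussianReal 0 (Real.toNNReal t) (Set.Icc (b*t - ε/2) (b*t + ε/2)) := by
    intro ε t ht
    simp only [Set.mem_Ioi] at ht
    have hset : MeasurableSet {ω : Ω | |W' t ω - b * t| ≤ ε/2} :=
      measurableSet_le (continuous_abs.measurable.comp ((hW'me t).sub measurable_const))
        measurable_const
    have h1 : ∀ ω : Ω, ({p : ℝ × Ω | |W' p.1 p.2 - b * p.1| ≤ ε/2}).indicator
        (fun _ => (1:ℝ≥0∞)) (t, ω)
        = ({ω : Ω | |W' t ω - b * t| ≤ ε/2}).indicator (fun _ => (1:ℝ≥0∞)) ω := by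
      intro ω
      simp only [Set.indicator_apply, Set.mem_setOf_eq]
    calc ∫⁻ ω, ({p : ℝ × Ω | |W' p.1 p.2 - b * p.1| ≤ ε/2}).indicator
          (fun _ => (1:ℝ≥0∞)) (t, ω) ∂P
        = ∫⁻ ω, ({ω : Ω | |W' t ω - b * t| ≤ ε/2}).indicator (fun _ => (1:ℝ≥0∞)) ω ∂P :=
          lintegral_congr h1
      _ = P {ω : Ω | |W' t ω - b * t| ≤ ε/2} := lintegral_indicator_one hset
      _ = P (W' t ⁻¹' Set.Icc (b*t - ε/2) (b*t + ε/2)) := by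
          congr 1
          ext ω
          exact habs _ _ _
      _ = (P.map (W' t)) (Set.Icc (b*t - ε/2) (b*t + ε/2)) :=
          (Measure.map_apply (hW'me t) measurableSet_Icc).symm
      _ = gaussianReal 0 (Real.toNNReal t) (Set.Icc (b*t - ε/2) (b*t + ε/2)) := by
          rw [hmap t ht.le]
  -- measurability of t ↦ strip mass
  have hmu : ∀ ε : ℝ, AEMeasurable
      (fun t => gaussianReal 0 (Real.toNNReal t) (Set.Icc (b*t - ε/2) (b*t + ε/2)))
      (volume.restrict (Set.Ioi (0:ℝ))) := by
    intro ε
    have hq : Measurable fun p : ℝ × Ω =>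
        ({p : ℝ × Ω | |W' p.1 p.2 - b * p.1| ≤ ε/2}).indicator (fun _ => (1:ℝ≥0∞)) p :=
      measurable_const.indicator (hAmeas ε)
    have h1 : Measurable fun t : ℝ => ∫⁻ ω, ({p : ℝ × Ω | |W' p.1 p.2 - b * p.1| ≤ ε/2}).indicator
        (fun _ => (1:ℝ≥0∞)) (t, ω) ∂P := hq.lintegral_prod_right'
    exact h1.aemeasurable.congr ((ae_restrict_iff' measurableSet_Ioi).2
      (Filter.Eventually.of_forall (hinner ε)))
  -- the real-valued density representation of the strip mass
  have hg_eq : ∀ ε : ℝ, ∀ t : ℝ, 0 < t →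
      ((gaussianReal 0 (Real.toNNReal t) (Set.Icc (b*t - ε/2) (b*t + ε/2)))).toReal
      = ∫ x in Set.Icc (b*t - ε/2) (b*t + ε/2), gaussianPDFReal 0 (Real.toNNReal t) x := by
    intro ε t ht
    have hv : Real.toNNReal t ≠ 0 := by
      simp [Real.toNNReal_eq_zero, not_le, ht]
    rw [gaussianReal_apply_eq_integral 0 hv, ENNReal.toReal_ofReal
      (setIntegral_nonneg measurableSet_Icc (fun x _ => gaussianPDFReal_nonneg 0 _ x))]
  -- the main identity, for 0 < ε ≤ |b|
  have key : ∀ ε : ℝ, 0 < ε → ε ≤ |b| →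
      ∫ ω, relTime W b ε ω ∂P
      = ∫ t in Set.Ioi (0:ℝ),
          (1/ε) * ((gaussianReal 0 (Real.toNNReal t)
            (Set.Icc (b*t - ε/2) (b*t + ε/2)))).toReal := by
    intro ε hε hεb
    have hq : Measurable fun p : ℝ × Ω =>
        ({p : ℝ × Ω | |W' p.1 p.2 - b * p.1| ≤ ε/2}).indicator (fun _ => (1:ℝ≥0∞)) p :=
      measurable_const.indicator (hAmeas ε)
    set F : Ω → ℝ≥0∞ := fun ω => ∫⁻ t in Set.Ioi (0:ℝ),
      ({p : ℝ × Ω | |W' p.1 p.2 - b * p.1| ≤ ε/2}).indicator (fun _ => (1:ℝ≥0∞)) (t, ω)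
      with hFdef
    have hFmeas : Measurable F := hq.lintegral_prod_left'
    set I : ℝ≥0∞ := ∫⁻ t in Set.Ioi (0:ℝ),
      gaussianReal 0 (Real.toNNReal t) (Set.Icc (b*t - ε/2) (b*t + ε/2)) with hIdef
    have hswap : ∫⁻ ω, F ω ∂P = I := by
      have h1 := lintegral_lintegral_swap (μ := volume.restrict (Set.Ioi (0:ℝ))) (ν := P)
        (f := fun t ω => ({p : ℝ × Ω | |W' p.1 p.2 - b * p.1| ≤ ε/2}).indicator
          (fun _ => (1:ℝ≥0∞)) (t, ω)) hq.aemeasurable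
      rw [hFdef, ← h1, hIdef]
      exact setLIntegral_congr_fun measurableSet_Ioi
        (hinner ε)
    have hb2 : (0:ℝ) < b^2/8 :=
      div_pos (lt_of_le_of_ne (sq_nonneg b) (Ne.symm (pow_ne_zero 2 hb))) (by norm_num)
    have hIlt : I < ⊤ := by
      have hint : IntegrableOn (fun t : ℝ => ε * (Real.exp (b^2/8) *
          ((Real.sqrt (2*Real.pi*t))⁻¹ * Real.exp (-(b^2/8) * t)))) (Set.Ioi 0) :=
        (h_int_aux hb2 (Real.exp (b^2/8))).const_mul ε
      calc I ≤ ∫⁻ t in Set.Ioi (0:ℝ), ENNReal.ofReal (ε * (Real.exp (b^2/8) *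
            ((Real.sqrt (2*Real.pi*t))⁻¹ * Real.exp (-(b^2/8) * t)))) := by
            rw [hIdef]
            apply setLIntegral_mono' measurableSet_Ioi
            intro t ht
            simp only [Set.mem_Ioi] at ht
            have hv : Real.toNNReal t ≠ 0 := by
              simp [Real.toNNReal_eq_zero, not_le, ht]
            rw [gaussianReal_apply_eq_integral 0 hv]
            exact ENNReal.ofReal_le_ofReal (strip_bound_aux hε hεb ht)
        _ < ⊤ := hint.lintegral_lt_top
    have hFae : ∀ᵐ ω ∂P, F ω < ⊤ := ae_lt_top hFmeas (by rw [hswap]; exact hIlt.ne)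
    have hrel : ∀ ω, relTime W' b ε ω = (1/ε) * (F ω).toReal := by
      intro ω
      simp only [relTime]
      congr 1
      have hcont : Continuous fun t : ℝ => W' t ω - b * t :=
        (hW'cont ω).sub (continuous_const.mul continuous_id)
      have hsm : MeasurableSet {t : ℝ | |W' t ω - b * t| ≤ ε/2} :=
        measurableSet_le (continuous_abs.comp hcont).measurable measurable_const
      have hms : Measurable fun t : ℝ => (if |W' t ω - b * t| ≤ ε/2 then (1:ℝ) else 0) :=
        Measurable.ite hsm measurable_const measurable_const
      rw [integral_eq_lintegral_of_nonneg_ae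
        (Filter.Eventually.of_forall (fun t => by
          by_cases hc : |W' t ω - b * t| ≤ ε/2 <;> simp [hc]))
        hms.aestronglyMeasurable]
      congr 1
      rw [hFdef]
      apply lintegral_congr
      intro t
      by_cases hc : |W' t ω - b * t| ≤ ε/2 <;>
        simp [Set.indicator_apply, Set.mem_setOf_eq, hc]
    calc ∫ ω, relTime W b ε ω ∂P
        = ∫ ω, relTime W' b ε ω ∂P := by
          apply integral_congr_ae
          filter_upwards [hNae] with ω hω
          have hWW : ∀ t : ℝ, W t ω = W' t ω := fun t => (if_neg hω).symm
          simp only [relTime, hWW]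
      _ = ∫ ω, (1/ε) * (F ω).toReal ∂P :=
          integral_congr_ae (Filter.Eventually.of_forall hrel)
      _ = (1/ε) * ∫ ω, (F ω).toReal ∂P := integral_const_mul _ _
      _ = (1/ε) * I.toReal := by
          rw [integral_toReal hFmeas.aemeasurable hFae, hswap]
      _ = ∫ t in Set.Ioi (0:ℝ), (1/ε) * ((gaussianReal 0 (Real.toNNReal t)
            (Set.Icc (b*t - ε/2) (b*t + ε/2)))).toReal := by
          rw [hIdef, ← integral_toReal (hmu ε) ((ae_restrict_iff' measurableSet_Ioi).2
            (Filter.Eventually.of_forall (fun t _ => measure_lt_top _ _))),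
            ← integral_const_mul]
  -- dominated convergence
  have hb2 : (0:ℝ) < b^2/8 :=
    div_pos (lt_of_le_of_ne (sq_nonneg b) (Ne.symm (pow_ne_zero 2 hb))) (by norm_num)
  have hDCT : Tendsto (fun ε : ℝ => ∫ t in Set.Ioi (0:ℝ),
      (1/ε) * ((gaussianReal 0 (Real.toNNReal t)
        (Set.Icc (b*t - ε/2) (b*t + ε/2)))).toReal)
      (nhdsWithin 0 (Set.Ioi 0))
      (nhds (∫ t in Set.Ioi (0:ℝ), gaussianPDFReal 0 (Real.toNNReal t) (b * t))) := by
    apply tendsto_integral_filter_of_dominated_convergence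
      (bound := fun t => Real.exp (b^2/8) *
        ((Real.sqrt (2*Real.pi*t))⁻¹ * Real.exp (-(b^2/8) * t)))
    · apply Filter.Eventually.of_forall
      intro ε
      exact (((hmu ε).ennreal_toReal).const_mul _).aestronglyMeasurable
    · filter_upwards [Ioc_mem_nhdsGT hbpos] with ε hε
      rw [ae_restrict_iff' measurableSet_Ioi]
      apply Filter.Eventually.of_forall
      intro t ht
      simp only [Set.mem_Ioi] at ht
      have h1ε : (0:ℝ) < 1/ε := one_div_pos.2 hε.1
      have hnn : 0 ≤ (1/ε) * ((gaussianReal 0 (Real.toNNReal t)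
          (Set.Icc (b*t - ε/2) (b*t + ε/2)))).toReal :=
        mul_nonneg h1ε.le ENNReal.toReal_nonneg
      rw [Real.norm_eq_abs, abs_of_nonneg hnn, hg_eq ε t ht]
      have hsb := strip_bound_aux hε.1 hε.2 ht
      calc (1/ε) * ∫ x in Set.Icc (b*t - ε/2) (b*t + ε/2),
            gaussianPDFReal 0 (Real.toNNReal t) x
          ≤ (1/ε) * (ε * (Real.exp (b^2/8) *
            ((Real.sqrt (2*Real.pi*t))⁻¹ * Real.exp (-(b^2/8) * t)))) :=
            mul_le_mul_of_nonneg_left hsb h1ε.le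
        _ = Real.exp (b^2/8) * ((Real.sqrt (2*Real.pi*t))⁻¹ * Real.exp (-(b^2/8) * t)) := by
            rw [← mul_assoc, one_div, inv_mul_cancel₀ hε.1.ne', one_mul]
    · exact h_int_aux hb2 (Real.exp (b^2/8))
    · rw [ae_restrict_iff' measurableSet_Ioi]
      apply Filter.Eventually.of_forall
      intro t ht
      simp only [Set.mem_Ioi] at ht
      have h1 := avg_tendsto_aux (pdf_cont_aux (Real.toNNReal t))
        (integrable_gaussianPDFReal 0 (Real.toNNReal t)) (b*t)
      apply h1.congr
      intro ε
      rw [hg_eq ε t ht]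
  rw [gauss_line_aux b hb] at hDCT
  refine Filter.Tendsto.congr' ?_ hDCT
  filter_upwards [Ioc_mem_nhdsGT hbpos] with ε hε
  exact (key ε hε.1 hε.2).symm
end

section
/- For all positive real numbers k and l, ∫_0^∞ exp(−(1/2)(k²y² + l²/y²)) dy = (√(2π)/(2k)) · e^{−kl}. -/
open Real MeasureTheory Set

/-- For positive reals `k` and `l`,
`∫_0^∞ exp(-(1/2)(k²y² + l²/y²)) dy = (√(2π)/(2k)) · e^{-kl}`. -/
theorem integral_exp_neg_sq_add_inv_sq (k l : ℝ) (hk : 0 < k) (hl : 0 < l) :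
    ∫ y in Set.Ioi (0 : ℝ), Real.exp (-(1 / 2) * (k ^ 2 * y ^ 2 + l ^ 2 / y ^ 2)) =
      Real.sqrt (2 * Real.pi) / (2 * k) * Real.exp (-(k * l)) := by
  set g : ℝ → ℝ := fun y => k * y - l / y with hg
  set E : ℝ → ℝ := fun y => Real.exp (-(1 / 2) * (g y) ^ 2) with hE
  -- derivative of g
  have hderiv : ∀ y ∈ Ioi (0:ℝ), HasDerivWithinAt g (k + l / y ^ 2) (Ioi 0) y := by
    intro y hy
    have hy0 : y ≠ 0 := ne_of_gt hy
    have h1 : HasDerivAt (fun y : ℝ => k * y - l / y) (k + l / y ^ 2) y := by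
      have h2 : HasDerivAt (fun y : ℝ => l / y) (-(l / y ^ 2)) y := by
        simpa [div_eq_mul_inv, mul_comm, neg_div] using
          ((hasDerivAt_inv hy0).const_mul l)
      exact (((hasDerivAt_id y).const_mul k).sub h2).congr_deriv (by ring)
    exact h1.hasDerivWithinAt
  -- g is injective on Ioi 0
  have hinj : InjOn g (Ioi (0:ℝ)) := by
    have hmono : StrictMonoOn g (Ioi (0:ℝ)) := by
      intro a ha b hb hab
      simp only [hg]
      have ha0 : (0:ℝ) < a := ha
      have hb0 : (0:ℝ) < b := hb
      have h3 : l / b < l / a := div_lt_div_of_pos_left hl ha0 hab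
      nlinarith [mul_lt_mul_of_pos_left hab hk]
    exact hmono.injOn
  -- g maps Ioi 0 onto ℝ
  have himg : g '' Ioi (0:ℝ) = univ := by
    apply eq_univ_of_forall
    intro u
    set y := (u + Real.sqrt (u ^ 2 + 4 * k * l)) / (2 * k) with hy
    have hs : Real.sqrt (u ^ 2 + 4 * k * l) ^ 2 = u ^ 2 + 4 * k * l :=
      Real.sq_sqrt (by nlinarith)
    have hsu : |u| < Real.sqrt (u ^ 2 + 4 * k * l) := by
      rw [← Real.sqrt_sq_eq_abs]
      apply Real.sqrt_lt_sqrt (sq_nonneg u)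
      nlinarith
    have hnum : 0 < u + Real.sqrt (u ^ 2 + 4 * k * l) := by
      have := neg_abs_le u
      linarith
    have hy0 : 0 < y := by rw [hy]; positivity
    refine ⟨y, hy0, ?_⟩
    have hyne : y ≠ 0 := ne_of_gt hy0
    have hkne : k ≠ 0 := ne_of_gt hk
    have hquad : k * y ^ 2 = u * y + l := by
      rw [hy]
      field_simp
      rw [show u ^ 2 + k * 4 * l = u ^ 2 + 4 * k * l by ring]
      nlinarith [hs]
    simp only [hg]
    field_simp
    nlinarith [hquad]
  -- Integrability of E on Ioi 0
  have hEcont : Continuous fun u : ℝ => Real.exp (-(1/2) * u ^ 2) := by continuity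
  have hEmeas : ContinuousOn E (Ioi (0:ℝ)) := by
    apply ContinuousOn.comp hEcont.continuousOn _ (mapsTo_univ _ _)
    apply ContinuousOn.sub (continuousOn_const.mul continuousOn_id)
    exact continuousOn_const.div continuousOn_id fun x hx => ne_of_gt hx
  have hGauss : Integrable (fun u : ℝ => Real.exp (-(1/2) * u ^ 2)) := by
    simpa using integrable_exp_neg_mul_sq (by norm_num : (0:ℝ) < 1/2)
  have hintE : IntegrableOn E (Ioi (0:ℝ)) := by
    apply Integrable.mono' (g := fun y => Real.exp (k * l) * Real.exp (-(k^2/2) * y^2))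
    · exact ((integrable_exp_neg_mul_sq (by positivity : (0:ℝ) < k^2/2)).const_mul
        (Real.exp (k*l))).integrableOn
    · exact (hEmeas.aestronglyMeasurable measurableSet_Ioi)
    · filter_upwards [self_mem_ae_restrict (measurableSet_Ioi : MeasurableSet (Ioi (0:ℝ)))]
        with y hy
      have hy0 : (0:ℝ) < y := hy
      rw [Real.norm_eq_abs, abs_of_pos (Real.exp_pos _), ← Real.exp_add]
      apply Real.exp_le_exp.2
      have h4 : (g y) ^ 2 = k^2 * y^2 + l^2 / y^2 - 2 * (k * l) := by
        simp only [hg]; field_simp; ring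
      have h5 : 0 ≤ l^2 / y^2 := by positivity
      nlinarith
  -- the combined substitution identity
  have hsub1 : Real.sqrt (2 * Real.pi) =
      ∫ y in Ioi (0:ℝ), (k + l / y ^ 2) * E y := by
    have h6 := integral_image_eq_integral_abs_deriv_smul measurableSet_Ioi hderiv hinj
      (fun u => Real.exp (-(1/2) * u ^ 2))
    rw [himg] at h6
    have h7 : ∫ u in (univ : Set ℝ), Real.exp (-(1/2) * u ^ 2) = Real.sqrt (2 * Real.pi) := by
      rw [Measure.restrict_univ]
      have := integral_gaussian (1/2 : ℝ)
      simp only [neg_mul] at this ⊢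
      rw [this, show Real.pi / (1/2) = 2 * Real.pi by ring]
    rw [h7] at h6
    rw [h6]
    apply setIntegral_congr_fun measurableSet_Ioi
    intro y hy
    have hy0 : (0:ℝ) < y := hy
    have : |k + l / y ^ 2| = k + l / y ^ 2 := abs_of_pos (by positivity)
    simp [this, hE, smul_eq_mul]
  -- integrability of the combined function
  have hintC : IntegrableOn (fun y => (k + l / y ^ 2) * E y) (Ioi (0:ℝ)) := by
    have hG2 : IntegrableOn (fun u => Real.exp (-(1/2) * u ^ 2)) (g '' Ioi (0:ℝ)) := by
      rw [himg]; exact hGauss.integrableOn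
    have h8 := (integrableOn_image_iff_integrableOn_abs_deriv_smul measurableSet_Ioi hderiv hinj
      (fun u => Real.exp (-(1/2) * u ^ 2))).1 hG2
    apply h8.congr_fun _ measurableSet_Ioi
    intro y hy
    have hy0 : (0:ℝ) < y := hy
    have : |k + l / y ^ 2| = k + l / y ^ 2 := abs_of_pos (by positivity)
    simp [this, hE, smul_eq_mul]
  -- integrability of (l/y²)E
  have hintD : IntegrableOn (fun y => (l / y ^ 2) * E y) (Ioi (0:ℝ)) := by
    have h11 : IntegrableOn
        ((fun y => (k + l / y ^ 2) * E y) - fun y => k * E y) (Ioi (0:ℝ)) :=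
      hintC.sub (hintE.const_mul k)
    apply h11.congr_fun _ measurableSet_Ioi
    intro y hy
    simp only [Pi.sub_apply]
    ring
  -- split the integral
  have hsplit : Real.sqrt (2 * Real.pi) =
      k * (∫ y in Ioi (0:ℝ), E y) + ∫ y in Ioi (0:ℝ), (l / y ^ 2) * E y := by
    rw [hsub1]
    rw [← integral_const_mul, ← integral_add ((hintE.const_mul k)) hintD]
    apply setIntegral_congr_fun measurableSet_Ioi
    intro y hy; ring
  -- second substitution: y ↦ l/(k y)
  have hsub2 : ∫ y in Ioi (0:ℝ), E y = ∫ y in Ioi (0:ℝ), (l / (k * y ^ 2)) * E y := by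
    set f : ℝ → ℝ := fun y => l / (k * y) with hf
    have hfderiv : ∀ y ∈ Ioi (0:ℝ), HasDerivWithinAt f (-(l / (k * y ^ 2))) (Ioi 0) y := by
      intro y hy
      have hy0 : y ≠ 0 := ne_of_gt hy
      have h3 := (hasDerivAt_inv hy0).const_mul (l / k)
      have h4 : (fun y : ℝ => l / k * y⁻¹) = fun y => l / (k * y) := by
        funext x
        rcases eq_or_ne x 0 with h | h
        · simp [h]
        · field_simp
      have h5 : l / k * -((y ^ 2 : ℝ)⁻¹) = -(l / (k * y ^ 2)) := by
        field_simp
      rw [h4, h5] at h3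
      exact h3.hasDerivWithinAt
    have hfinv : ∀ y ∈ Ioi (0:ℝ), f (f y) = y := by
      intro y hy
      have hy0 : y ≠ 0 := ne_of_gt hy
      simp only [hf]
      field_simp
    have hfmaps : MapsTo f (Ioi (0:ℝ)) (Ioi (0:ℝ)) := by
      intro y hy
      have hy0 : (0:ℝ) < y := hy
      exact mem_Ioi.2 (by positivity)
    have hfinj : InjOn f (Ioi (0:ℝ)) := fun a ha b hb hab => by
      rw [← hfinv a ha, ← hfinv b hb, hab]
    have hfimg : f '' Ioi (0:ℝ) = Ioi (0:ℝ) := by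
      apply Subset.antisymm (image_subset_iff.2 hfmaps)
      intro y hy
      exact ⟨f y, hfmaps hy, hfinv y hy⟩
    have h9 := integral_image_eq_integral_abs_deriv_smul measurableSet_Ioi hfderiv hfinj E
    rw [hfimg] at h9
    rw [h9]
    apply setIntegral_congr_fun measurableSet_Ioi
    intro y hy
    have hy0 : (0:ℝ) < y := hy
    have habs : |(-(l / (k * y ^ 2)))| = l / (k * y ^ 2) := by
      rw [abs_neg]; exact abs_of_pos (by positivity)
    have hEf : E (f y) = E y := by
      simp only [hE, hf, hg]
      congr 1
      have hy0' : y ≠ 0 := ne_of_gt hy0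
      have : k * (l / (k * y)) - l / (l / (k * y)) = -(k * y - l / y) := by
        field_simp
        ring
      rw [this]
      ring
    show |(-(l / (k * y ^ 2)))| • E (f y) = l / (k * y ^ 2) * E y
    rw [habs, hEf, smul_eq_mul]
  -- combine: √(2π) = 2 k J
  have hkne : (k:ℝ) ≠ 0 := ne_of_gt hk
  have hJ : ∫ y in Ioi (0:ℝ), E y = Real.sqrt (2 * Real.pi) / (2 * k) := by
    have h10 : ∫ y in Ioi (0:ℝ), (l / y ^ 2) * E y
        = k * ∫ y in Ioi (0:ℝ), E y := by
      rw [hsub2, ← integral_const_mul]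
      apply setIntegral_congr_fun measurableSet_Ioi
      intro y hy
      have hy0 : (0:ℝ) < y := hy
      field_simp
    rw [h10] at hsplit
    rw [eq_div_iff (by positivity : (2*k) ≠ (0:ℝ))]
    linarith
  -- final: original integrand = exp(-kl) * E y on Ioi 0
  have hfinal : ∫ y in Ioi (0:ℝ), Real.exp (-(1 / 2) * (k ^ 2 * y ^ 2 + l ^ 2 / y ^ 2))
      = Real.exp (-(k * l)) * ∫ y in Ioi (0:ℝ), E y := by
    rw [← integral_const_mul]
    apply setIntegral_congr_fun measurableSet_Ioi
    intro y hy
    have hy0 : (0:ℝ) < y := hy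
    have hy0' : y ≠ 0 := ne_of_gt hy0
    show Real.exp (-(1 / 2) * (k ^ 2 * y ^ 2 + l ^ 2 / y ^ 2))
      = Real.exp (-(k * l)) * Real.exp (-(1 / 2) * (g y) ^ 2)
    rw [← Real.exp_add]
    congr 1
    simp only [hg]
    field_simp
    ring
  rw [hfinal, hJ]
  ring
end
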